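/- arXiv:math-ph/0312035 — 2 statements merged into one kernel-verified Lean document; each statement's English description precedes it below -/
import Mathlib

section
/- Let x ∈ (0,1) be irrational and let qₙ(x) be the denominators of its continued fraction convergents. Then (1/n)·∑_{i=0}^{n-1} 2·log(1/Tⁱ(x)) - (2/n)·log qₙ(x) tends to 0 as n → ∞. In particular, the Lyapunov exponent λ(x) = lim_{n→∞} (1/n) log |(Tⁿ)′(x)| exists if and only if lim_{n→∞} (2/n) log qₙ(x) exists, and in that case λ(x) = 2 lim_{n→∞} (1/n) log qₙ(x), since |T′(y)| = 1/y² at irrational points y. -/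
open Filter

/-- The Gauss (continued fraction) shift map `T(x) = 1/x - ⌊1/x⌋`. -/
noncomputable def gaussMap (x : ℝ) : ℝ := 1 / x - ⌊1 / x⌋

namespace LyapAux

open GenContFract

lemma gaussMap_eq_fract_inv (y : ℝ) : gaussMap y = Int.fract y⁻¹ := by
  unfold gaussMap Int.fract
  rw [one_div]

lemma gauss_step {y : ℝ} (hy : y ∈ Set.Ioo (0:ℝ) 1) (hirr : Irrational y) :
    gaussMap y ∈ Set.Ioo (0:ℝ) 1 ∧ Irrational (gaussMap y) := by
  have hgi : Irrational (gaussMap y) := by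
    rw [gaussMap_eq_fract_inv, Int.fract]
    exact hirr.inv.sub_intCast _
  refine ⟨⟨?_, ?_⟩, hgi⟩
  · rcases lt_or_eq_of_le (by rw [gaussMap_eq_fract_inv]; exact Int.fract_nonneg _ :
      (0:ℝ) ≤ gaussMap y) with h | h
    · exact h
    · exact absurd h.symm (by simpa using hgi.ne_int 0)
  · rw [gaussMap_eq_fract_inv]; exact Int.fract_lt_one _

lemma gauss_iter {y : ℝ} (hy : y ∈ Set.Ioo (0:ℝ) 1) (hirr : Irrational y) (n : ℕ) :
    gaussMap^[n] y ∈ Set.Ioo (0:ℝ) 1 ∧ Irrational (gaussMap^[n] y) := by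
  induction n with
  | zero => exact ⟨hy, hirr⟩
  | succ n ih =>
    rw [Function.iterate_succ_apply']
    exact gauss_step ih.1 ih.2

lemma of_s_get?_fract (v : ℝ) (h : Int.fract v ≠ 0) (n : ℕ) :
    (GenContFract.of (Int.fract v)).s.get? n = (GenContFract.of v).s.get? n := by
  have h2 : Int.fract (Int.fract v) ≠ 0 := by rw [Int.fract_fract]; exact h
  cases n with
  | zero =>
    show (GenContFract.of (Int.fract v)).s.head = (GenContFract.of v).s.head
    rw [of_s_head h, of_s_head h2, Int.fract_fract]
  | succ m =>
    rw [of_s_succ, of_s_succ, Int.fract_fract]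

lemma of_s_get?_eq {y : ℝ} (hy : y ∈ Set.Ioo (0:ℝ) 1) (hirr : Irrational y) (n : ℕ) :
    (GenContFract.of y).s.get? n = some ⟨1, (⌊(gaussMap^[n] y)⁻¹⌋ : ℝ)⟩ := by
  induction n generalizing y with
  | zero =>
    have hf : Int.fract y = y := Int.fract_eq_self.mpr ⟨le_of_lt hy.1, hy.2⟩
    have h : Int.fract y ≠ 0 := by rw [hf]; exact ne_of_gt hy.1
    show (GenContFract.of y).s.head = _
    rw [of_s_head h, hf]
    rfl
  | succ n ih =>
    have hf : Int.fract y = y := Int.fract_eq_self.mpr ⟨le_of_lt hy.1, hy.2⟩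
    have hg := gauss_step hy hirr
    have hfr : Int.fract y⁻¹ ≠ 0 := by
      rw [← gaussMap_eq_fract_inv]; exact ne_of_gt hg.1.1
    rw [of_s_succ, hf, ← of_s_get?_fract y⁻¹ hfr n, ← gaussMap_eq_fract_inv,
      ih hg.1 hg.2, Function.iterate_succ_apply]

end LyapAux

open LyapAux GenContFract in
/-- Let `x ∈ (0,1)` be irrational and let `qₙ(x) = (GenContFract.of x).dens n` be the
denominators of its continued fraction convergents.  Then
`(1/n)·∑_{i=0}^{n-1} 2·log(1/Tⁱ(x)) - (2/n)·log qₙ(x) → 0` as `n → ∞`.  In particular,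
since `|(Tⁿ)′(x)| = ∏_{i=0}^{n-1} (Tⁱx)⁻²`, the Lyapunov exponent
`λ(x) = lim (1/n) log |(Tⁿ)′(x)|` exists (with value `L`) if and only if
`lim (2/n) log qₙ(x)` exists (with the same value `L`), i.e.
`λ(x) = 2·lim (1/n) log qₙ(x)` whenever either limit exists. -/
theorem lyapunov_exponent_via_denominators (x : ℝ) (hx : x ∈ Set.Ioo (0 : ℝ) 1)
    (hirr : Irrational x) :
    Tendsto
      (fun n : ℕ =>
        (1 / (n : ℝ)) * ∑ i ∈ Finset.range n, 2 * Real.log (1 / gaussMap^[i] x) -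
          (2 / (n : ℝ)) * Real.log ((GenContFract.of x).dens n))
      atTop (nhds 0) ∧
    ∀ L : ℝ,
      Tendsto
        (fun n : ℕ =>
          (1 / (n : ℝ)) * Real.log (∏ i ∈ Finset.range n, (1 / gaussMap^[i] x) ^ 2))
        atTop (nhds L) ↔
      Tendsto (fun n : ℕ => (2 / (n : ℝ)) * Real.log ((GenContFract.of x).dens n))
        atTop (nhds L) := by
  set X : ℕ → ℝ := fun n => gaussMap^[n] x with hX
  set q : ℕ → ℝ := fun n => (GenContFract.of x).dens n with hq
  set B : ℕ → ℝ := fun n => ((GenContFract.of x).contsAux n).b with hB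
  have hXi : ∀ n, X n ∈ Set.Ioo (0:ℝ) 1 ∧ Irrational (X n) := gauss_iter hx hirr
  have hX0 : ∀ n, 0 < X n := fun n => (hXi n).1.1
  have hX1 : ∀ n, X n < 1 := fun n => (hXi n).1.2
  have hXsucc : ∀ n, X (n+1) = 1 / X n - ⌊1 / X n⌋ := by
    intro n
    show gaussMap^[n+1] x = _
    rw [Function.iterate_succ_apply']
    rfl
  have hfloor : ∀ n, (1:ℝ) ≤ (⌊1 / X n⌋ : ℝ) := by
    intro n
    have h1 : (1:ℝ) ≤ 1 / X n := (le_div_iff₀ (hX0 n)).mpr (by linarith [hX1 n])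
    exact_mod_cast Int.le_floor.mpr (by exact_mod_cast h1)
  have hB0 : B 0 = 0 := by
    show ((GenContFract.of x).contsAux 0).b = 0
    rw [zeroth_contAux_eq_one_zero]
  have hq0 : q 0 = 1 := zeroth_den_eq_one
  have hBsucc : ∀ n, B (n + 1) = q n := by
    intro n
    show ((GenContFract.of x).contsAux (n+1)).b = (GenContFract.of x).dens n
    rw [← nth_cont_eq_succ_nth_contAux, den_eq_conts_b]
  have hsget : ∀ n, (GenContFract.of x).s.get? n = some ⟨1, (⌊(X n)⁻¹⌋ : ℝ)⟩ := of_s_get?_eq hx hirr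
  -- the denominator recurrence
  have hrec : ∀ n, q (n + 1) = (⌊1 / X n⌋ : ℝ) * q n + B n := by
    intro n
    have h1 := hsget n
    rw [show (X n)⁻¹ = 1 / X n from (one_div _).symm] at h1
    cases n with
    | zero =>
      show (GenContFract.of x).dens 1 = _
      rw [first_den_eq (g := GenContFract.of x) h1, hq0, hB0]
      simp
    | succ m =>
      show (GenContFract.of x).dens (m + 2) = _
      rw [dens_recurrence (g := GenContFract.of x) h1 (rfl : (GenContFract.of x).dens m = q m)
        (rfl : (GenContFract.of x).dens (m+1) = q (m+1)), hBsucc m]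
      ring
  -- positivity and monotonicity facts
  have hqB : ∀ n, 1 ≤ q n ∧ 0 ≤ B n ∧ B n ≤ q n := by
    intro n
    induction n with
    | zero => rw [hq0, hB0]; norm_num
    | succ n ih =>
      have h1 := hrec n
      have h2 : q n ≤ q (n + 1) := by nlinarith [hfloor n, ih.1, ih.2.1, ih.2.2]
      refine ⟨le_trans ih.1 h2, ?_, ?_⟩
      · rw [hBsucc]; linarith [ih.1]
      · rw [hBsucc]; exact h2
  have hqpos : ∀ n, (0:ℝ) < q n := fun n => lt_of_lt_of_le one_pos (hqB n).1
  -- the key identity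
  have hident : ∀ n, ∏ i ∈ Finset.range n, X i = (q n + B n * X n)⁻¹ := by
    intro n
    induction n with
    | zero => simp [hq0, hB0]
    | succ n ih =>
      have hXn := hX0 n
      have hden : 0 < q n + B n * X n := by nlinarith [hqpos n, (hqB n).2.1]
      rw [Finset.prod_range_succ, ih, hrec n, hBsucc n, hXsucc n]
      have hC : (⌊1/X n⌋ : ℝ) * q n + B n + q n * (1/X n - ⌊1/X n⌋)
          = (q n + B n * X n) / X n := by
        field_simp
        ring
      rw [hC, inv_div, div_eq_mul_inv]
      exact mul_comm _ _
  have hD : ∀ n, 0 < q n + B n * X n := by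
    intro n; nlinarith [hqpos n, (hqB n).2.1, hX0 n]
  have hDle : ∀ n, q n + B n * X n ≤ 2 * q n := by
    intro n
    nlinarith [(hqB n).2.1, (hqB n).2.2, hX0 n, hX1 n]
  -- log sum identity
  have hsum : ∀ n, ∑ i ∈ Finset.range n, 2 * Real.log (1 / X i)
      = 2 * Real.log (q n + B n * X n) := by
    intro n
    have h1 : ∑ i ∈ Finset.range n, Real.log (1 / X i)
        = Real.log (∏ i ∈ Finset.range n, (1 / X i)) :=
      (Real.log_prod (fun i _ => one_div_ne_zero (ne_of_gt (hX0 i)))).symm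
    have h2 : (∏ i ∈ Finset.range n, (1 / X i)) = q n + B n * X n := by
      simp only [one_div]
      rw [Finset.prod_inv_distrib, hident n, inv_inv]
    rw [← Finset.mul_sum, h1, h2]
  -- bounds on the log difference
  have hlogdiff : ∀ n, 0 ≤ Real.log (q n + B n * X n) - Real.log (q n) ∧
      Real.log (q n + B n * X n) - Real.log (q n) ≤ Real.log 2 := by
    intro n
    constructor
    · have : q n ≤ q n + B n * X n := by nlinarith [(hqB n).2.1, hX0 n]
      linarith [Real.log_le_log (hqpos n) this]
    · have h1 : Real.log (q n + B n * X n) ≤ Real.log (2 * q n) :=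
        Real.log_le_log (hD n) (hDle n)
      rw [Real.log_mul two_ne_zero (ne_of_gt (hqpos n))] at h1
      linarith
  -- the difference expression
  have hEeq : ∀ n : ℕ,
      (1 / (n : ℝ)) * ∑ i ∈ Finset.range n, 2 * Real.log (1 / X i) -
        (2 / (n : ℝ)) * Real.log (q n)
      = (2 / (n : ℝ)) * (Real.log (q n + B n * X n) - Real.log (q n)) := by
    intro n
    rw [hsum n]
    ring
  have key : Tendsto
      (fun n : ℕ =>
        (1 / (n : ℝ)) * ∑ i ∈ Finset.range n, 2 * Real.log (1 / X i) -
          (2 / (n : ℝ)) * Real.log (q n)) atTop (nhds 0) := by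
    apply squeeze_zero (g := fun n : ℕ => (2 / (n : ℝ)) * Real.log 2)
    · intro n
      rw [hEeq n]
      have hn : (0:ℝ) ≤ 2 / (n:ℝ) := by positivity
      exact mul_nonneg hn (hlogdiff n).1
    · intro n
      rw [hEeq n]
      have hn : (0:ℝ) ≤ 2 / (n:ℝ) := by positivity
      exact mul_le_mul_of_nonneg_left (hlogdiff n).2 hn
    · have h1 : Tendsto (fun n : ℕ => (1:ℝ) / n) atTop (nhds 0) :=
        tendsto_one_div_atTop_nhds_zero_nat
      have h2 := h1.const_mul (2 * Real.log 2)
      rw [mul_zero] at h2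
      convert h2 using 2 with n
      ring
  -- identify the product-of-squares expression with the sum
  have hfeq : ∀ n : ℕ,
      (1 / (n : ℝ)) * Real.log (∏ i ∈ Finset.range n, (1 / X i) ^ 2)
      = (1 / (n : ℝ)) * ∑ i ∈ Finset.range n, 2 * Real.log (1 / X i) := by
    intro n
    congr 1
    rw [Real.log_prod (fun i _ => pow_ne_zero 2 (one_div_ne_zero (ne_of_gt (hX0 i))))]
    refine Finset.sum_congr rfl fun i _ => ?_
    rw [Real.log_pow]
    push_cast
    ring
  refine ⟨key, fun L => ?_⟩
  constructor
  · intro hf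
    have hf' : Tendsto
        (fun n : ℕ =>
          (1 / (n : ℝ)) * ∑ i ∈ Finset.range n, 2 * Real.log (1 / X i))
        atTop (nhds L) := by
      convert hf using 2 with n
      exact (hfeq n).symm
    have := hf'.sub key
    rw [sub_zero] at this
    convert this using 2 with n
    ring
  · intro hg
    have := key.add hg
    rw [zero_add] at this
    have h2 : Tendsto
        (fun n : ℕ =>
          (1 / (n : ℝ)) * ∑ i ∈ Finset.range n, 2 * Real.log (1 / X i))
        atTop (nhds L) := by
      convert this using 2 with n
      ring
    convert h2 using 2 with n
    exact hfeq n
end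

section
/- The extended shift map T(x, s) = (1/x - ⌊1/x⌋, g_{⌊1/x⌋}·s) on (0,1) × ℙ¹(𝔽₂), where g_k is the Möbius action on ℙ¹(𝔽₂) of the matrix with rows (-k, 1) and (1, 0) reduced mod 2, preserves the probability measure dμ(x,s) = dx ⊗ δ(s) / (3·log 2·(1+x)), i.e. the measure on (0,1) × ℙ¹(𝔽₂) whose marginal density with respect to Lebesgue measure on (0,1) is 1/(log 2·(1+x)) and which gives each of the three points of ℙ¹(𝔽₂) equal mass 1/3 (the map T being defined at all points with x irrational, hence μ-almost everywhere). -/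
open Matrix MeasureTheory

/-- The projective line `ℙ¹(𝔽₂)` over the field with two elements. -/
abbrev P1F2 := Projectivization (ZMod 2) (Fin 2 → ZMod 2)

/-- The Möbius (projective linear) action of an invertible `2×2` matrix over `𝔽₂`
on the projective line `ℙ¹(𝔽₂)`. -/
noncomputable def mobius (M : Matrix (Fin 2) (Fin 2) (ZMod 2)) (h : Invertible M) :
    P1F2 → P1F2 :=
  Projectivization.map (M.toLinearEquiv' h).toLinearMap (M.toLinearEquiv' h).injective

/-- Reduction mod 2 of an integer `2×2` matrix. -/
def red2 (m : Matrix (Fin 2) (Fin 2) ℤ) : Matrix (Fin 2) (Fin 2) (ZMod 2) :=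
  m.map (Int.cast : ℤ → ZMod 2)

/-- The Möbius action on `ℙ¹(𝔽₂)` of the mod-2 reduction of the integer matrix
with rows `(-k, 1)` and `(1, 0)`. -/
noncomputable def gAct (k : ℤ) : P1F2 → P1F2 :=
  mobius (red2 !![-k, 1; 1, 0])
    (Matrix.invertibleOfIsUnitDet _ (by
      simp [red2, Matrix.det_fin_two, Matrix.map_apply]))

instance : MeasurableSpace P1F2 := ⊤

instance : MeasurableSingletonClass P1F2 := ⟨fun _ => trivial⟩

/-- The extended shift `T(x,s) = (1/x - ⌊1/x⌋, g_{⌊1/x⌋}·s)` on `ℝ × ℙ¹(𝔽₂)`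
(defined at all points with `x` irrational, and extended by the conventions
`1/0 = 0` elsewhere). -/
noncomputable def extShift (p : ℝ × P1F2) : ℝ × P1F2 :=
  (1 / p.1 - ⌊1 / p.1⌋, gAct ⌊1 / p.1⌋ p.2)

/-- The invariant measure `dμ(x,s) = dx ⊗ δ(s) / (3·log 2·(1+x))` on `(0,1) × ℙ¹(𝔽₂)`:
its marginal density w.r.t. Lebesgue measure on `(0,1)` is `1/(log 2·(1+x))` and it gives
each of the three points of `ℙ¹(𝔽₂)` equal mass `1/3`. -/
noncomputable def mixmasterMeasure : Measure (ℝ × P1F2) :=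
  ((volume.restrict (Set.Ioo (0 : ℝ) 1)).withDensity
      (fun x => ENNReal.ofReal (1 / (Real.log 2 * (1 + x))))).prod
    ((3 : ENNReal)⁻¹ • Measure.count)

section Aux
open Set Filter Topology

noncomputable def nu : Measure ℝ :=
  (volume.restrict (Set.Ioo (0 : ℝ) 1)).withDensity
    (fun x => ENNReal.ofReal (1 / (Real.log 2 * (1 + x))))

lemma L_pos : 0 < Real.log 2 := Real.log_pos (by norm_num)

lemma nu_apply {s : Set ℝ} (hs : MeasurableSet s) :
    nu s = ∫⁻ x in s ∩ Set.Ioo 0 1, ENNReal.ofReal (1 / (Real.log 2 * (1 + x))) := by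
  rw [nu, withDensity_apply _ hs, Measure.restrict_restrict hs]

lemma nu_compl : nu (Set.Ioo (0:ℝ) 1)ᶜ = 0 := by
  rw [nu_apply measurableSet_Ioo.compl, Set.compl_inter_self, setLIntegral_empty]

lemma nu_inter (s : Set ℝ) : nu s = nu (s ∩ Set.Ioo 0 1) := by
  have h := measure_inter_add_diff (μ := nu) s (measurableSet_Ioo (a := (0:ℝ)) (b := 1))
  have h2 : nu (s \ Set.Ioo 0 1) = 0 :=
    measure_mono_null (fun x hx => hx.2) nu_compl
  rw [← h, h2, add_zero]

instance : NullSingletonClass nu := by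
  constructor
  intro x
  rw [nu_apply (measurableSet_singleton x)]
  apply setLIntegral_measure_zero
  exact measure_mono_null Set.inter_subset_left (measure_singleton x)

lemma interval_int {a b : ℝ} (h0 : 0 ≤ a) (hab : a ≤ b) (hb1 : b ≤ 1) :
    ∫⁻ x in Set.Ioo a b, ENNReal.ofReal (1 / (Real.log 2 * (1 + x)))
      = ENNReal.ofReal ((Real.log (1+b) - Real.log (1+a)) / Real.log 2) := by
  have hL := L_pos
  have hcont : ContinuousOn (fun x : ℝ => 1 / (Real.log 2 * (1 + x))) (Set.Icc a b) := by
    apply ContinuousOn.div continuousOn_const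
    · exact (continuous_const.mul (continuous_const.add continuous_id)).continuousOn
    · intro x hx
      have : 0 < 1 + x := by have := hx.1; linarith
      positivity
  have hint : IntegrableOn (fun x : ℝ => 1 / (Real.log 2 * (1 + x))) (Set.Ioo a b) := by
    exact (hcont.integrableOn_Icc).mono_set Set.Ioo_subset_Icc_self
  rw [← ofReal_integral_eq_lintegral_ofReal hint]
  · congr 1
    rw [← integral_Ioc_eq_integral_Ioo, ← intervalIntegral.integral_of_le hab]
    have : ∀ x ∈ Set.uIcc a b, 1 / (Real.log 2 * (1 + x)) = (Real.log 2)⁻¹ * (1 + x)⁻¹ := by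
      intro x hx; rw [one_div, mul_inv]
    rw [intervalIntegral.integral_congr this, intervalIntegral.integral_const_mul]
    have h1 : (fun x : ℝ => (1 + x)⁻¹) = fun x : ℝ => (fun u : ℝ => u⁻¹) (1 + x) := rfl
    rw [h1, intervalIntegral.integral_comp_add_left (fun u : ℝ => u⁻¹) 1,
      integral_inv (by rw [Set.uIcc_of_le (by linarith)]; intro h; simp at h; linarith)]
    rw [Real.log_div (by linarith) (by linarith)]
    ring
  · filter_upwards [ae_restrict_mem measurableSet_Ioo] with x hx
    have h1 : 0 < 1 + x := by have := hx.1; linarith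
    positivity

lemma nu_Icc {a b : ℝ} (h0 : 0 ≤ a) (hab : a ≤ b) (hb1 : b ≤ 1) :
    nu (Set.Icc a b) = ENNReal.ofReal ((Real.log (1+b) - Real.log (1+a)) / Real.log 2) := by
  rw [← measure_congr (Ioo_ae_eq_Icc (μ := nu)), nu_apply measurableSet_Ioo,
    Set.inter_eq_left.mpr (Set.Ioo_subset_Ioo h0 hb1),
    interval_int h0 hab hb1]

lemma nu_univ : nu Set.univ = 1 := by
  rw [nu_apply MeasurableSet.univ, Set.univ_inter, interval_int le_rfl zero_le_one le_rfl]
  rw [show (1:ℝ)+1 = 2 by norm_num, show (1:ℝ)+0 = 1 by norm_num, Real.log_one, sub_zero,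
    div_self (ne_of_gt L_pos)]
  exact ENNReal.ofReal_one

instance : IsFiniteMeasure nu := ⟨by rw [nu_univ]; exact ENNReal.one_lt_top⟩

lemma measurable_G : Measurable (fun x : ℝ => Int.fract (1/x)) := by
  have h1 : Measurable (fun x : ℝ => 1/x) := measurable_const.div measurable_id
  exact Measurable.sub h1 ((measurable_of_countable (fun n : ℤ => (n:ℝ))).comp h1.floor)

theorem gauss_mp : MeasurePreserving (fun x : ℝ => Int.fract (1/x)) nu nu := by
  refine ⟨measurable_G, ?_⟩
  have hfin : IsFiniteMeasure (Measure.map (fun x : ℝ => Int.fract (1/x)) nu) :=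
    ⟨by rw [Measure.map_apply measurable_G MeasurableSet.univ]; exact measure_lt_top _ _⟩
  refine Measure.ext_of_Iic _ _ (fun y => ?_)
  rw [Measure.map_apply measurable_G measurableSet_Iic]
  have hL := L_pos
  rcases le_or_gt y 0 with hy | hy
  · have h1 : nu (Set.Iic y) = 0 := by
      rw [nu_inter]
      have he : Set.Iic y ∩ Set.Ioo 0 1 = ∅ := by
        ext x
        simp only [Set.mem_inter_iff, Set.mem_Iic, Set.mem_Ioo, Set.mem_empty_iff_false,
          iff_false, not_and]
        intro h1 h2
        linarith
      rw [he, measure_empty]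
    rw [h1]
    have hsub : (fun x : ℝ => Int.fract (1/x)) ⁻¹' Set.Iic y
        ⊆ Set.range (fun n : ℤ => ((n : ℝ))⁻¹) := by
      intro x hx
      simp only [Set.mem_preimage, Set.mem_Iic] at hx
      have h0 : Int.fract (1/x) = 0 := le_antisymm (hx.trans hy) (Int.fract_nonneg _)
      rw [Int.fract] at h0
      have hfe : (1:ℝ)/x = (⌊1/x⌋ : ℝ) := by linarith
      refine ⟨⌊1/x⌋, ?_⟩
      by_cases hx0 : x = 0
      · subst hx0
        simp only [div_zero, Int.floor_zero] at hfe ⊢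
        simp
      · have hne : ((⌊1/x⌋ : ℝ)) ≠ 0 := by
          rw [← hfe]
          exact one_div_ne_zero hx0
        show ((⌊1/x⌋ : ℝ))⁻¹ = x
        rw [← hfe, one_div, inv_inv]
    exact measure_mono_null hsub ((Set.countable_range _).measure_zero _)
  rcases lt_or_ge y 1 with hy1 | hy1
  · -- main case 0 < y < 1
    set b : ℕ → ℝ := fun n => ((n:ℝ) + 1 + y)⁻¹ with hb
    set c : ℕ → ℝ := fun n => ((n:ℝ) + 1)⁻¹ with hc
    have hcpos : ∀ n, 0 < c n := fun n => by positivity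
    have hbpos : ∀ n, 0 < b n := fun n => by positivity
    have hbc : ∀ n, b n ≤ c n := fun n =>
      inv_anti₀ (by positivity) (by linarith)
    have hc1 : ∀ n, c n ≤ 1 := fun n => by
      rw [hc]
      rw [inv_le_one_iff₀]
      right; linarith [Nat.cast_nonneg (α := ℝ) n]
    set S : Set ℝ := (fun x : ℝ => Int.fract (1/x)) ⁻¹' Set.Iic y with hS
    have hU : S ∩ Set.Ioc 0 1 = ⋃ n : ℕ, Set.Icc (b n) (c n) := by
      ext x
      simp only [Set.mem_inter_iff, Set.mem_preimage, Set.mem_Iic, Set.mem_Ioc, Set.mem_iUnion,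
        Set.mem_Icc, hS]
      constructor
      · rintro ⟨hfr, hx0, hx1⟩
        rw [Int.fract] at hfr
        have hinv1 : (1:ℝ) ≤ 1/x := (le_div_iff₀ hx0).mpr (by linarith)
        have hm1 : 1 ≤ ⌊1/x⌋ := Int.le_floor.mpr (by exact_mod_cast hinv1)
        have hfl : ((⌊1/x⌋ : ℝ)) ≤ 1/x := Int.floor_le _
        refine ⟨(⌊1/x⌋ - 1).toNat, ?_, ?_⟩
        · have hcast : (((⌊1/x⌋ - 1).toNat : ℝ)) = (⌊1/x⌋ : ℝ) - 1 := by
            rw [← Int.cast_natCast, Int.toNat_of_nonneg (show (0:ℤ) ≤ ⌊1/x⌋ - 1 by omega)]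
            push_cast; ring
          show ((((⌊1/x⌋ - 1).toNat : ℝ)) + 1 + y)⁻¹ ≤ x
          rw [hcast]
          have h2 : 1/x ≤ (⌊1/x⌋ : ℝ) - 1 + 1 + y := by linarith
          have h3 : (0:ℝ) < (⌊1/x⌋ : ℝ) - 1 + 1 + y := by
            have : (1:ℝ) ≤ (⌊1/x⌋ : ℝ) := by exact_mod_cast hm1
            linarith
          calc ((⌊1/x⌋:ℝ) - 1 + 1 + y)⁻¹ ≤ (1/x)⁻¹ := inv_anti₀ (by positivity) h2
            _ = x := by rw [one_div, inv_inv]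
        · have hcast : (((⌊1/x⌋ - 1).toNat : ℝ)) = (⌊1/x⌋ : ℝ) - 1 := by
            rw [← Int.cast_natCast, Int.toNat_of_nonneg (show (0:ℤ) ≤ ⌊1/x⌋ - 1 by omega)]
            push_cast; ring
          show x ≤ (((⌊1/x⌋ - 1).toNat : ℝ) + 1)⁻¹
          rw [hcast]
          have h3 : (0:ℝ) < (⌊1/x⌋ : ℝ) - 1 + 1 := by
            have : (1:ℝ) ≤ (⌊1/x⌋ : ℝ) := by exact_mod_cast hm1
            linarith
          calc x = (1/x)⁻¹ := by rw [one_div, inv_inv]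
            _ ≤ ((⌊1/x⌋:ℝ) - 1 + 1)⁻¹ := inv_anti₀ h3 (by linarith)
      · rintro ⟨n, hbx, hxc⟩
        have hx0 : 0 < x := lt_of_lt_of_le (hbpos n) hbx
        have hx1 : x ≤ 1 := hxc.trans (hc1 n)
        have hinvl : ((n:ℝ) + 1) ≤ 1/x := by
          rw [le_div_iff₀ hx0]
          calc ((n:ℝ)+1) * x ≤ ((n:ℝ)+1) * c n := by
                apply mul_le_mul_of_nonneg_left hxc (by positivity)
            _ = 1 := by rw [hc]; field_simp
        have hinvu : 1/x ≤ (n:ℝ) + 1 + y := by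
          rw [div_le_iff₀ hx0]
          calc (1:ℝ) = ((n:ℝ)+1+y) * b n := by rw [hb]; field_simp
            _ ≤ ((n:ℝ)+1+y) * x := by
                apply mul_le_mul_of_nonneg_left hbx (by positivity)
        have hfl : ⌊1/x⌋ = (n:ℤ) + 1 := by
          apply Int.floor_eq_iff.mpr
          constructor
          · push_cast; linarith
          · push_cast; linarith
        refine ⟨?_, hx0, hx1⟩
        rw [Int.fract, hfl]
        push_cast
        linarith
    have hSU : nu S = nu (⋃ n : ℕ, Set.Icc (b n) (c n)) := by
      rw [nu_inter S, nu_inter (⋃ n : ℕ, Set.Icc (b n) (c n))]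
      congr 1
      rw [← hU]
      ext x
      constructor
      · rintro ⟨hs, hx0, hx1⟩
        exact ⟨⟨hs, hx0, hx1.le⟩, hx0, hx1⟩
      · rintro ⟨⟨hs, _⟩, h⟩
        exact ⟨hs, h⟩
    have hdis : Pairwise (Function.onFun Disjoint fun n : ℕ => Set.Icc (b n) (c n)) := by
      refine (pairwise_disjoint_on _).2 fun m n hmn => ?_
      rw [Set.disjoint_left]
      intro x hx1 hx2
      have h1 : c n < b m := by
        rw [hb, hc]
        apply inv_strictAnti₀ (by positivity)
        have : (m:ℝ) + 1 ≤ (n:ℝ) := by exact_mod_cast Nat.succ_le_of_lt hmn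
        linarith
      have := hx1.1
      have := hx2.2
      linarith
    rw [hSU, measure_iUnion hdis (fun n => measurableSet_Icc)]
    -- compute each term and sum
    set F : ℕ → ℝ := fun n => Real.log (((n:ℝ) + 1 + y) / ((n:ℝ) + 1)) with hF
    have hterm : ∀ n : ℕ, nu (Set.Icc (b n) (c n))
        = ENNReal.ofReal ((F n - F (n+1)) / Real.log 2) := by
      intro n
      rw [nu_Icc (hbpos n).le (hbc n) (hc1 n)]
      congr 1
      rw [hF]
      have e1 : 1 + c n = ((n:ℝ) + 2) / ((n:ℝ) + 1) := by rw [hc]; field_simp; ring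
      have e2 : 1 + b n = ((n:ℝ) + 2 + y) / ((n:ℝ) + 1 + y) := by rw [hb]; field_simp; ring
      rw [e1, e2]
      push_cast
      rw [Real.log_div (by positivity) (by positivity),
        Real.log_div (by positivity) (by positivity),
        Real.log_div (by positivity) (by positivity),
        Real.log_div (by positivity) (by positivity)]
      ring_nf
    have hFanti : ∀ n : ℕ, F (n+1) ≤ F n := by
      intro n
      rw [hF]
      push_cast
      apply (Real.log_le_log_iff (by positivity) (by positivity)).mpr
      rw [div_le_div_iff₀ (by positivity) (by positivity)]
      nlinarith [hy.le]
    have hFlim : Tendsto F atTop (𝓝 0) := by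
      have h1 : ∀ n : ℕ, F n = Real.log (1 + y / ((n:ℝ) + 1)) := by
        intro n
        rw [hF]
        congr 1
        field_simp
      have h3 : Tendsto (fun n : ℕ => ((n:ℝ) + 1)) atTop atTop :=
        tendsto_atTop_add_const_right atTop 1 tendsto_natCast_atTop_atTop
      have h3' : Tendsto (fun n : ℕ => y / ((n:ℝ) + 1)) atTop (𝓝 0) :=
        Tendsto.div_atTop (tendsto_const_nhds (x := y) (f := atTop)) h3
      have h2 : Tendsto (fun n : ℕ => 1 + y / ((n:ℝ) + 1)) atTop (𝓝 1) := by
        have := (tendsto_const_nhds (x := (1:ℝ)) (f := atTop (α := ℕ))).add h3'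
        rw [add_zero] at this
        exact this
      have h4 := ((Real.continuousAt_log (by norm_num : (1:ℝ) ≠ 0)).tendsto).comp h2
      rw [Real.log_one] at h4
      have h5 : F = fun n : ℕ => Real.log (1 + y / ((n:ℝ) + 1)) := funext h1
      rw [h5]
      exact h4
    have hsum : ∑' n : ℕ, ENNReal.ofReal ((F n - F (n+1)) / Real.log 2)
        = ENNReal.ofReal (F 0 / Real.log 2) := by
      have hpart : ∀ N : ℕ, ∑ i ∈ Finset.range N, ENNReal.ofReal ((F i - F (i+1)) / Real.log 2)
          = ENNReal.ofReal ((F 0 - F N) / Real.log 2) := by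
        intro N
        rw [← ENNReal.ofReal_sum_of_nonneg
          (fun i _ => div_nonneg (sub_nonneg.mpr (hFanti i)) hL.le)]
        congr 1
        rw [← Finset.sum_div, Finset.sum_range_sub' F]
      have h1 := ENNReal.tendsto_nat_tsum
        (fun n => ENNReal.ofReal ((F n - F (n+1)) / Real.log 2))
      simp only [hpart] at h1
      have h2 : Tendsto (fun N : ℕ => ENNReal.ofReal ((F 0 - F N) / Real.log 2)) atTop
          (𝓝 (ENNReal.ofReal (F 0 / Real.log 2))) := by
        have h3 : Tendsto (fun N : ℕ => (F 0 - F N) / Real.log 2) atTop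
            (𝓝 (F 0 / Real.log 2)) := by
          have := (tendsto_const_nhds (x := F 0) (f := atTop (α := ℕ))).sub hFlim
          rw [sub_zero] at this
          exact this.div_const _
        exact (ENNReal.continuous_ofReal.tendsto _).comp h3
      exact tendsto_nhds_unique h1 h2
    simp only [hterm]
    rw [hsum]
    -- RHS
    have hrhs : nu (Set.Iic y) = ENNReal.ofReal (Real.log (1 + y) / Real.log 2) := by
      rw [nu_inter (Set.Iic y)]
      have he : Set.Iic y ∩ Set.Ioo 0 1 = Set.Icc 0 y ∩ Set.Ioo 0 1 := by
        ext x
        simp only [Set.mem_inter_iff, Set.mem_Iic, Set.mem_Icc, Set.mem_Ioo]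
        constructor
        · rintro ⟨h1, h2, h3⟩; exact ⟨⟨h2.le, h1⟩, h2, h3⟩
        · rintro ⟨⟨_, h1⟩, h2⟩; exact ⟨h1, h2⟩
      rw [he, ← nu_inter (Set.Icc 0 y), nu_Icc le_rfl hy.le hy1.le]
      rw [show (1:ℝ) + 0 = 1 by norm_num, Real.log_one, sub_zero]
    rw [hrhs]
    congr 1
    rw [hF]
    norm_num
  · -- y ≥ 1
    have hall : (fun x : ℝ => Int.fract (1/x)) ⁻¹' Set.Iic y = Set.univ := by
      ext x
      simp only [Set.mem_preimage, Set.mem_Iic, Set.mem_univ, iff_true]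
      exact le_trans (Int.fract_lt_one _).le hy1
    have hi : Set.Iic y ∩ Set.Ioo 0 1 = Set.Ioo 0 1 :=
      Set.inter_eq_right.mpr (fun x hx => le_trans (le_of_lt hx.2) hy1)
    rw [hall, nu_inter Set.univ, Set.univ_inter, nu_inter (Set.Iic y), hi]

instance : Finite P1F2 :=
  (Quotient.finite (projectivizationSetoid (ZMod 2) (Fin 2 → ZMod 2)) : _)

lemma count_map_eq {f : P1F2 → P1F2} (hf : Function.Injective f) :
    Measure.map f Measure.count = Measure.count := by
  have hb : Function.Bijective f := Finite.injective_iff_bijective.mp hf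
  ext s _
  rw [Measure.map_apply (measurable_of_countable f) trivial]
  have h1 : f ⁻¹' s = (Equiv.ofBijective f hb).symm '' s := by
    rw [Equiv.image_eq_preimage_symm]; rfl
  rw [h1, Measure.count_injective_image (Equiv.ofBijective f hb).symm.injective]

lemma mobius_injective (M : Matrix (Fin 2) (Fin 2) (ZMod 2)) (h : Invertible M) :
    Function.Injective (mobius M h) :=
  Projectivization.map_injective _ (M.toLinearEquiv' h).injective

lemma gAct_injective (k : ℤ) : Function.Injective (gAct k) :=
  mobius_injective _ _

noncomputable def kappa : Measure P1F2 := (3 : ENNReal)⁻¹ • Measure.count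

instance : IsFiniteMeasure kappa := by
  constructor
  rw [kappa, Measure.smul_apply, smul_eq_mul, Measure.count_apply_finite _ Set.finite_univ]
  exact ENNReal.mul_lt_top (by simp) (ENNReal.natCast_lt_top _)

lemma kappa_map_eq (k : ℤ) : Measure.map (gAct k) kappa = kappa := by
  rw [kappa, Measure.map_smul, count_map_eq (gAct_injective k)]

end Aux

set_option maxHeartbeats 2000000 in
/-- The extended shift of the continued fraction expansion on `(0,1) × ℙ¹(𝔽₂)` preserves
the probability measure `dμ(x,s) = dx ⊗ δ(s)/(3·log 2·(1+x))`. -/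
theorem extShift_measurePreserving :
    MeasurePreserving extShift mixmasterMeasure mixmasterMeasure := by
  have h1 : Measurable (fun p : ℝ × P1F2 => ((⌊1/p.1⌋, p.2) : ℤ × P1F2)) :=
    ((measurable_const.div measurable_fst).floor).prodMk measurable_snd
  have h2 : Measurable ((fun q : ℤ × P1F2 => gAct q.1 q.2) ∘
      (fun p : ℝ × P1F2 => ((⌊1/p.1⌋, p.2) : ℤ × P1F2))) :=
    Measurable.comp (measurable_of_countable _) h1
  have hgm : Measurable (Function.uncurry fun (x : ℝ) (s : P1F2) => gAct ⌊1/x⌋ s) := h2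
  have key := MeasurePreserving.skew_product (μc := kappa) (μd := kappa)
    gauss_mp hgm (Filter.Eventually.of_forall (fun x => kappa_map_eq ⌊1/x⌋))
  have he : extShift = fun p : ℝ × P1F2 => (Int.fract (1/p.1), gAct ⌊1/p.1⌋ p.2) := rfl
  have hm : mixmasterMeasure = nu.prod kappa := rfl
  rw [he, hm]
  exact key
end
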